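/- Let p ≥ 1, 0 < ϑ < 1, a, b, c ≥ 1, A ∈ ℝ^{Nn}, v ∈ L^p(Q, ℝ^N) with Q a space-time cylinder, and let φ : [r, ρ] → [0, ∞) be a bounded function satisfying φ(s) ≤ ϑ φ(t) + a ∫_Q |V_{|A|}(v/(t-s))|² dz + b/(t-s)² + c for all r ≤ s < t ≤ ρ, where V_μ(B) = (μ² + |B|²)^((p-2)/4) B. Then there is C = C(ϑ, p) such that φ(r) ≤ C [ a ∫_Q |V_{|A|}(v/(ρ-r))|² dz + b/(ρ-r)² + c ]. -/

import Mathlib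

open MeasureTheory

/-- The V-function `V_μ(B) = (μ² + |B|²)^((p-2)/4) B`. -/
noncomputable def Vfun (p mu : ℝ) {k : ℕ} (B : EuclideanSpace ℝ (Fin k)) :
    EuclideanSpace ℝ (Fin k) :=
  ((mu ^ 2 + ‖B‖ ^ 2) ^ ((p - 2) / 4)) • B

/-- The intrinsic parabolic cylinder
`Q_ρ^{(λ)}(z₀) = B_ρ(x₀) × (t₀ - λ^{2-p}ρ², t₀ + λ^{2-p}ρ²)`. -/
noncomputable def cylQ (n : ℕ) (p lam ρ : ℝ) (x₀ : EuclideanSpace ℝ (Fin n))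
    (t₀ : ℝ) : Set (EuclideanSpace ℝ (Fin n) × ℝ) :=
  (Metric.ball x₀ ρ) ×ˢ
    Set.Ioo (t₀ - lam ^ (2 - p) * ρ ^ 2) (t₀ + lam ^ (2 - p) * ρ ^ 2)
open MeasureTheory

section Aux

/-- Norm-square of the V-function. -/
lemma Vnorm_sq (p mu : ℝ) {k : ℕ} (B : EuclideanSpace ℝ (Fin k)) :
    ‖Vfun p mu B‖ ^ 2 = (mu ^ 2 + ‖B‖ ^ 2) ^ ((p - 2) / 2) * ‖B‖ ^ 2 := by
  have hb : (0:ℝ) ≤ mu ^ 2 + ‖B‖ ^ 2 := by positivity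
  unfold Vfun
  rw [norm_smul, Real.norm_eq_abs, abs_of_nonneg (Real.rpow_nonneg hb _), mul_pow]
  congr 1
  rw [← Real.rpow_natCast ((mu ^ 2 + ‖B‖ ^ 2) ^ ((p - 2) / 4)) 2, ← Real.rpow_mul hb]
  congr 1
  ring

/-- Scalar bound `W(x) ≤ (μ+x)^p`. -/
lemma W_le (p mu x : ℝ) (hp : 1 ≤ p) (hmu : 0 ≤ mu) (hx : 0 ≤ x) :
    (mu ^ 2 + x ^ 2) ^ ((p - 2) / 2) * x ^ 2 ≤ (mu + x) ^ p := by
  rcases eq_or_lt_of_le hx with h0 | hx0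
  · rw [← h0]
    simpa using Real.rpow_nonneg (by linarith) p
  by_cases hp2 : 2 ≤ p
  · have h1 : mu ^ 2 + x ^ 2 ≤ (mu + x) ^ 2 := by nlinarith
    have h2 : (mu ^ 2 + x ^ 2) ^ ((p - 2) / 2) ≤ ((mu + x) ^ 2) ^ ((p - 2) / 2) :=
      Real.rpow_le_rpow (by positivity) h1 (by linarith)
    have h3 : ((mu + x) ^ 2 : ℝ) ^ ((p - 2) / 2) = (mu + x) ^ (p - 2) := by
      rw [← Real.rpow_natCast (mu + x) 2, ← Real.rpow_mul (by linarith)]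
      congr 1
      ring
    have h4 : x ^ 2 ≤ (mu + x) ^ 2 := by nlinarith
    have h5 : (0:ℝ) ≤ (mu + x) ^ (p - 2) := Real.rpow_nonneg (by linarith) _
    calc (mu ^ 2 + x ^ 2) ^ ((p - 2) / 2) * x ^ 2
        ≤ (mu + x) ^ (p - 2) * (mu + x) ^ 2 := by
          rw [← h3]
          exact mul_le_mul h2 h4 (by positivity) (by positivity)
      _ = (mu + x) ^ p := by
          rw [← Real.rpow_natCast (mu + x) 2, ← Real.rpow_add (by linarith)]
          congr 1
          ring
  · push_neg at hp2
    have h1 : (mu ^ 2 + x ^ 2) ^ ((p - 2) / 2) ≤ (x ^ 2) ^ ((p - 2) / 2) :=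
      Real.rpow_le_rpow_of_nonpos (by positivity) (by nlinarith) (by linarith)
    have h2 : (x ^ 2 : ℝ) ^ ((p - 2) / 2) * x ^ 2 = x ^ p := by
      rw [← Real.rpow_natCast x 2, ← Real.rpow_mul hx, ← Real.rpow_add hx0]
      congr 1
      ring
    calc (mu ^ 2 + x ^ 2) ^ ((p - 2) / 2) * x ^ 2
        ≤ (x ^ 2) ^ ((p - 2) / 2) * x ^ 2 := by
          exact mul_le_mul_of_nonneg_right h1 (by positivity)
      _ = x ^ p := h2
      _ ≤ (mu + x) ^ p := Real.rpow_le_rpow hx (by linarith) (by linarith)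

/-- Scalar scaling bound. -/
lemma W_scale (p mu L x : ℝ) (hp : 1 ≤ p) (hmu : 0 ≤ mu) (hL : 1 ≤ L) (hx : 0 ≤ x) :
    (mu ^ 2 + (L * x) ^ 2) ^ ((p - 2) / 2) * (L * x) ^ 2 ≤
      L ^ max 2 p * ((mu ^ 2 + x ^ 2) ^ ((p - 2) / 2) * x ^ 2) := by
  have hL0 : (0:ℝ) < L := by linarith
  rcases eq_or_lt_of_le hx with h0 | hx0
  · rw [← h0]
    have : (0:ℝ) ≤ L ^ max 2 p := Real.rpow_nonneg hL0.le _
    simp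
  by_cases hp2 : 2 ≤ p
  · have hqp : max 2 p = p := max_eq_right hp2
    have h1 : mu ^ 2 + (L * x) ^ 2 ≤ L ^ 2 * (mu ^ 2 + x ^ 2) := by
      nlinarith [sq_nonneg (L - 1), sq_nonneg mu]
    have h2 : (mu ^ 2 + (L * x) ^ 2) ^ ((p - 2) / 2) ≤
        (L ^ 2 * (mu ^ 2 + x ^ 2)) ^ ((p - 2) / 2) :=
      Real.rpow_le_rpow (by positivity) h1 (by linarith)
    have h3 : ((L:ℝ) ^ 2 * (mu ^ 2 + x ^ 2)) ^ ((p - 2) / 2) =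
        L ^ (p - 2) * (mu ^ 2 + x ^ 2) ^ ((p - 2) / 2) := by
      rw [Real.mul_rpow (by positivity) (by positivity)]
      congr 1
      rw [← Real.rpow_natCast L 2, ← Real.rpow_mul hL0.le]
      congr 1
      ring
    calc (mu ^ 2 + (L * x) ^ 2) ^ ((p - 2) / 2) * (L * x) ^ 2
        ≤ (L ^ (p - 2) * (mu ^ 2 + x ^ 2) ^ ((p - 2) / 2)) * (L * x) ^ 2 := by
          rw [← h3]
          exact mul_le_mul_of_nonneg_right h2 (by positivity)
      _ = (L ^ (p - 2) * L ^ 2) * ((mu ^ 2 + x ^ 2) ^ ((p - 2) / 2) * x ^ 2) := by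
          rw [mul_pow]; ring
      _ = L ^ max 2 p * ((mu ^ 2 + x ^ 2) ^ ((p - 2) / 2) * x ^ 2) := by
          rw [hqp, ← Real.rpow_natCast L 2, ← Real.rpow_add hL0]
          congr 1
          ring
  · push_neg at hp2
    have hq2 : max 2 p = 2 := max_eq_left hp2.le
    have h1 : (mu ^ 2 + (L * x) ^ 2) ^ ((p - 2) / 2) ≤ (mu ^ 2 + x ^ 2) ^ ((p - 2) / 2) :=
      Real.rpow_le_rpow_of_nonpos (by positivity) (by nlinarith [sq_nonneg (L - 1), sq_nonneg x]) (by linarith)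
    calc (mu ^ 2 + (L * x) ^ 2) ^ ((p - 2) / 2) * (L * x) ^ 2
        ≤ (mu ^ 2 + x ^ 2) ^ ((p - 2) / 2) * (L * x) ^ 2 :=
          mul_le_mul_of_nonneg_right h1 (by positivity)
      _ = L ^ 2 * ((mu ^ 2 + x ^ 2) ^ ((p - 2) / 2) * x ^ 2) := by rw [mul_pow]; ring
      _ = L ^ max 2 p * ((mu ^ 2 + x ^ 2) ^ ((p - 2) / 2) * x ^ 2) := by
          rw [hq2, ← Real.rpow_natCast L 2]
          norm_num

/-- Vector scaling bound. -/
lemma Vnorm_scale (p mu L : ℝ) (hp : 1 ≤ p) (hmu : 0 ≤ mu) (hL : 1 ≤ L) {k : ℕ}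
    (B : EuclideanSpace ℝ (Fin k)) :
    ‖Vfun p mu (L • B)‖ ^ 2 ≤ L ^ max 2 p * ‖Vfun p mu B‖ ^ 2 := by
  rw [Vnorm_sq, Vnorm_sq, norm_smul, Real.norm_eq_abs, abs_of_nonneg (by linarith : (0:ℝ) ≤ L)]
  exact W_scale p mu L ‖B‖ hp hmu hL (norm_nonneg B)

lemma geom_sum_le_inv {x : ℝ} (h0 : 0 < x) (h1 : x < 1) (m : ℕ) :
    (∑ i ∈ Finset.range m, x ^ i) ≤ (1 - x)⁻¹ := by
  rw [geom_sum_eq h1.ne m]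
  have hpow : (0:ℝ) ≤ x ^ m := pow_nonneg h0.le m
  have hden : (0:ℝ) < 1 - x := by linarith
  rw [show (x ^ m - 1) / (x - 1) = (1 - x ^ m) * (1 - x)⁻¹ by
    rw [div_eq_mul_inv, show x - 1 = -(1 - x) by ring, inv_neg]; ring]
  calc (1 - x ^ m) * (1 - x)⁻¹ ≤ 1 * (1 - x)⁻¹ :=
      mul_le_mul_of_nonneg_right (by linarith) (inv_nonneg.mpr hden.le)
    _ = (1 - x)⁻¹ := one_mul _

end Aux

set_option maxHeartbeats 1600000 in
/-- Lemma 2.2 (iteration lemma): if the bounded function `φ : [r,ρ] → [0,∞)`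
satisfies `φ(s) ≤ ϑφ(t) + a∫_Q |V_{|A|}(v/(t-s))|² + b/(t-s)² + c` for all
`r ≤ s < t ≤ ρ`, then
`φ(r) ≤ C(ϑ,p) [a∫_Q |V_{|A|}(v/(ρ-r))|² + b/(ρ-r)² + c]`. -/
theorem iteration_lemma (p ϑ : ℝ) (hp : 1 ≤ p) (hϑ0 : 0 < ϑ) (hϑ1 : ϑ < 1) :
    ∃ C : ℝ, 0 < C ∧ ∀ (n k : ℕ) (lam ρ r t₀ a b c : ℝ)
      (x₀ : EuclideanSpace ℝ (Fin n)) (A : EuclideanSpace ℝ (Fin k))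
      (v : EuclideanSpace ℝ (Fin n) × ℝ → EuclideanSpace ℝ (Fin k))
      (φ : ℝ → ℝ),
      0 < lam → 1 ≤ a → 1 ≤ b → 1 ≤ c → r < ρ →
      MemLp v (ENNReal.ofReal p) (volume.restrict (cylQ n p lam ρ x₀ t₀)) →
      (∀ s ∈ Set.Icc r ρ, 0 ≤ φ s) →
      (∃ K : ℝ, ∀ s ∈ Set.Icc r ρ, φ s ≤ K) →
      (∀ s t : ℝ, r ≤ s → s < t → t ≤ ρ →
        φ s ≤ ϑ * φ t +
          a * (∫ z in cylQ n p lam ρ x₀ t₀,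
                ‖Vfun p ‖A‖ ((t - s)⁻¹ • v z)‖ ^ 2) +
          b / (t - s) ^ 2 + c) →
      φ r ≤ C * (a * (∫ z in cylQ n p lam ρ x₀ t₀,
                ‖Vfun p ‖A‖ ((ρ - r)⁻¹ • v z)‖ ^ 2) +
          b / (ρ - r) ^ 2 + c) := by
  -- parameters of the iteration
  set q : ℝ := max 2 p with hq_def
  have hq2 : (2:ℝ) ≤ q := le_max_left _ _
  have hq0 : (0:ℝ) < q := by linarith
  set θ : ℝ := ((1 + ϑ) / 2) ^ (1 / q) with hθ_def
  have hbase0 : (0:ℝ) < (1 + ϑ) / 2 := by linarith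
  have hbase1 : (1 + ϑ) / 2 < 1 := by linarith
  have hθ0 : 0 < θ := Real.rpow_pos_of_pos hbase0 _
  have hθ1 : θ < 1 := Real.rpow_lt_one hbase0.le hbase1 (by positivity)
  have hθq : θ ^ q = (1 + ϑ) / 2 := by
    rw [hθ_def, ← Real.rpow_mul hbase0.le, one_div_mul_cancel hq0.ne', Real.rpow_one]
  set γ : ℝ := ϑ / θ ^ q with hγ_def
  have hγval : γ = 2 * ϑ / (1 + ϑ) := by
    rw [hγ_def, hθq]
    field_simp
  have hγ0 : 0 < γ := by
    rw [hγval]; positivity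
  have hγ1 : γ < 1 := by
    rw [hγval, div_lt_one (by linarith)]; linarith
  set D : ℝ := (1 - θ)⁻¹ ^ q with hD_def
  have hD0 : 0 < D := Real.rpow_pos_of_pos (inv_pos.mpr (by linarith)) _
  refine ⟨D * (1 - γ)⁻¹, mul_pos hD0 (inv_pos.mpr (by linarith)), ?_⟩
  intro n k lam ρ r t₀ a b c x₀ A v φ hlam ha hb hc hrρ hv hφ0 hφbdd hiter
  obtain ⟨K, hK⟩ := hφbdd
  have hρr : 0 < ρ - r := by linarith
  set Q : Set (EuclideanSpace ℝ (Fin n) × ℝ) := cylQ n p lam ρ x₀ t₀ with hQ_def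
  set μ0 : ℝ := ‖A‖ with hμ0_def
  have hμ0 : 0 ≤ μ0 := norm_nonneg A
  set w : EuclideanSpace ℝ (Fin n) × ℝ → EuclideanSpace ℝ (Fin k) :=
    fun z => (ρ - r)⁻¹ • v z with hw_def
  set g₀ : EuclideanSpace ℝ (Fin n) × ℝ → ℝ := fun z => ‖Vfun p μ0 (w z)‖ ^ 2 with hg₀_def
  set I₀ : ℝ := ∫ z in Q, g₀ z with hI₀_def
  have hI₀nn : 0 ≤ I₀ := by
    apply integral_nonneg
    intro z
    positivity
  set R : ℝ := a * I₀ + b / (ρ - r) ^ 2 + c with hR_def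
  have hRnn : 0 ≤ R := by
    have h1 : 0 ≤ b / (ρ - r) ^ 2 := by positivity
    have h2 : 0 ≤ a * I₀ := mul_nonneg (by linarith) hI₀nn
    rw [hR_def]; linarith
  -- finite measure and integrability of g₀
  have hQfin : volume Q < ⊤ := by
    rw [hQ_def]
    unfold cylQ
    rw [MeasureTheory.Measure.volume_eq_prod, MeasureTheory.Measure.prod_prod]
    exact ENNReal.mul_lt_top measure_ball_lt_top measure_Ioo_lt_top
  haveI : IsFiniteMeasure (volume.restrict Q) :=
    ⟨by rwa [Measure.restrict_apply_univ]⟩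
  have hw_mem : MemLp w (ENNReal.ofReal p) (volume.restrict Q) := hv.const_smul (ρ - r)⁻¹
  have hVm : AEStronglyMeasurable (fun z => Vfun p μ0 (w z)) (volume.restrict Q) := by
    have hn : AEMeasurable (fun z => μ0 ^ 2 + ‖w z‖ ^ 2) (volume.restrict Q) :=
      aemeasurable_const.add ((hw_mem.aestronglyMeasurable.norm.aemeasurable).pow_const 2)
    have hs : AEStronglyMeasurable
        (fun z => (μ0 ^ 2 + ‖w z‖ ^ 2) ^ ((p - 2) / 4)) (volume.restrict Q) :=
      (hn.pow_const ((p - 2) / 4)).aestronglyMeasurable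
    exact hs.smul hw_mem.aestronglyMeasurable
  have hg₀meas : AEStronglyMeasurable g₀ (volume.restrict Q) :=
    (hVm.norm.aemeasurable.pow_const 2).aestronglyMeasurable
  have hdom : Integrable (fun z => (μ0 + ‖w z‖) ^ p) (volume.restrict Q) := by
    have h1 : MemLp (fun z => μ0 + ‖w z‖) (ENNReal.ofReal p) (volume.restrict Q) := by
      have := (memLp_const (μ := volume.restrict Q) (p := ENNReal.ofReal p) μ0).add
        hw_mem.norm
      simpa [Pi.add_def] using this
    have h2 := h1.integrable_norm_rpow
      (by simp [ENNReal.ofReal_eq_zero]; linarith) ENNReal.ofReal_ne_top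
    refine h2.congr (Filter.Eventually.of_forall fun z => ?_)
    simp only [ENNReal.toReal_ofReal (by linarith : (0:ℝ) ≤ p),
      Real.norm_of_nonneg (show (0:ℝ) ≤ μ0 + ‖w z‖ by positivity)]
  have hg₀int : Integrable g₀ (volume.restrict Q) := by
    refine hdom.mono' hg₀meas (Filter.Eventually.of_forall fun z => ?_)
    rw [Real.norm_of_nonneg (by positivity)]
    rw [hg₀_def]
    simp only
    rw [Vnorm_sq]
    exact W_le p μ0 ‖w z‖ hp hμ0 (norm_nonneg _)
  -- the sequence of radii
  set s : ℕ → ℝ := fun i => ρ - (ρ - r) * θ ^ i with hs_def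
  have hs0 : s 0 = r := by simp [hs_def]
  have hθpow_pos : ∀ i : ℕ, 0 < θ ^ i := fun i => pow_pos hθ0 i
  have hθpow_le1 : ∀ i : ℕ, θ ^ i ≤ 1 := fun i => pow_le_one₀ hθ0.le hθ1.le
  have hsr : ∀ i, r ≤ s i := by
    intro i
    have h1 : (ρ - r) * θ ^ i ≤ (ρ - r) * 1 :=
      mul_le_mul_of_nonneg_left (hθpow_le1 i) hρr.le
    simp only [hs_def]; linarith [h1]
  have hsρ : ∀ i, s i ≤ ρ := by
    intro i
    have : 0 < (ρ - r) * θ ^ i := mul_pos hρr (hθpow_pos i)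
    simp only [hs_def]; linarith
  have hδ : ∀ i, s (i + 1) - s i = (ρ - r) * θ ^ i * (1 - θ) := by
    intro i
    simp only [hs_def, pow_succ]
    ring
  have hsmono : ∀ i, s i < s (i + 1) := by
    intro i
    have : 0 < (ρ - r) * θ ^ i * (1 - θ) := by
      apply mul_pos (mul_pos hρr (hθpow_pos i)); linarith
    have h2 := hδ i
    linarith
  -- the per-step scaling factor
  set Λ : ℕ → ℝ := fun i => (1 - θ)⁻¹ * (θ ^ i)⁻¹ with hΛ_def
  have hΛ1 : ∀ i, 1 ≤ Λ i := by
    intro i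
    have h1 : (1:ℝ) ≤ (1 - θ)⁻¹ := by
      rw [le_inv_comm₀ one_pos (by linarith)]
      · linarith
    have h2 : (1:ℝ) ≤ (θ ^ i)⁻¹ := by
      rw [le_inv_comm₀ one_pos (hθpow_pos i)]
      · simpa using hθpow_le1 i
    calc (1:ℝ) = 1 * 1 := by ring
      _ ≤ (1 - θ)⁻¹ * (θ ^ i)⁻¹ := mul_le_mul h1 h2 one_pos.le (by linarith)
  have hΛpos : ∀ i, 0 < Λ i := fun i => lt_of_lt_of_le one_pos (hΛ1 i)
  have hinv : ∀ i, (s (i + 1) - s i)⁻¹ = Λ i * (ρ - r)⁻¹ := by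
    intro i
    rw [hδ i]
    simp only [hΛ_def]
    field_simp
  -- per-step integral bound
  have hIbound : ∀ i, (∫ z in Q, ‖Vfun p μ0 ((s (i + 1) - s i)⁻¹ • v z)‖ ^ 2) ≤
      Λ i ^ q * I₀ := by
    intro i
    have hpt : ∀ z, ‖Vfun p μ0 ((s (i + 1) - s i)⁻¹ • v z)‖ ^ 2 ≤ Λ i ^ q * g₀ z := by
      intro z
      rw [hinv i, mul_smul]
      exact Vnorm_scale p μ0 (Λ i) hp hμ0 (hΛ1 i) _
    calc (∫ z in Q, ‖Vfun p μ0 ((s (i + 1) - s i)⁻¹ • v z)‖ ^ 2)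
        ≤ ∫ z in Q, Λ i ^ q * g₀ z := by
          apply integral_mono_of_nonneg
          · exact Filter.Eventually.of_forall fun z => by positivity
          · exact hg₀int.const_mul _
          · exact Filter.Eventually.of_forall hpt
      _ = Λ i ^ q * I₀ := by rw [integral_const_mul, hI₀_def]
  -- per-step full bound
  have hE : ∀ i, a * (∫ z in Q, ‖Vfun p μ0 ((s (i + 1) - s i)⁻¹ • v z)‖ ^ 2) +
      b / (s (i + 1) - s i) ^ 2 + c ≤ Λ i ^ q * R := by
    intro i
    have hΛq1 : 1 ≤ Λ i ^ q := Real.one_le_rpow (hΛ1 i) hq0.le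
    have h1 : a * (∫ z in Q, ‖Vfun p μ0 ((s (i + 1) - s i)⁻¹ • v z)‖ ^ 2) ≤
        Λ i ^ q * (a * I₀) := by
      have := mul_le_mul_of_nonneg_left (hIbound i) (by linarith : (0:ℝ) ≤ a)
      calc a * (∫ z in Q, ‖Vfun p μ0 ((s (i + 1) - s i)⁻¹ • v z)‖ ^ 2)
          ≤ a * (Λ i ^ q * I₀) := this
        _ = Λ i ^ q * (a * I₀) := by ring
    have h2 : b / (s (i + 1) - s i) ^ 2 ≤ Λ i ^ q * (b / (ρ - r) ^ 2) := by
      have hΛ2q : (Λ i) ^ (2:ℕ) ≤ Λ i ^ q := by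
        rw [← Real.rpow_natCast (Λ i) 2]
        exact Real.rpow_le_rpow_of_exponent_le (hΛ1 i) (by exact_mod_cast hq2)
      have heq : b / (s (i + 1) - s i) ^ 2 = (Λ i) ^ (2:ℕ) * (b / (ρ - r) ^ 2) := by
        rw [div_eq_mul_inv, div_eq_mul_inv, ← inv_pow, hinv i, mul_pow, inv_pow]
        ring
      rw [heq]
      exact mul_le_mul_of_nonneg_right hΛ2q (by positivity)
    have h3 : c ≤ Λ i ^ q * c := le_mul_of_one_le_left (by linarith) hΛq1
    calc a * (∫ z in Q, ‖Vfun p μ0 ((s (i + 1) - s i)⁻¹ • v z)‖ ^ 2) +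
        b / (s (i + 1) - s i) ^ 2 + c
        ≤ Λ i ^ q * (a * I₀) + Λ i ^ q * (b / (ρ - r) ^ 2) + Λ i ^ q * c := by
          linarith
      _ = Λ i ^ q * R := by rw [hR_def]; ring
  -- combine geometric factors
  have hΛγ : ∀ i : ℕ, ϑ ^ i * Λ i ^ q = D * γ ^ i := by
    intro i
    have h1 : Λ i ^ q = (1 - θ)⁻¹ ^ q * ((θ⁻¹) ^ q) ^ i := by
      simp only [hΛ_def]
      rw [(by rw [inv_pow] : (θ ^ i)⁻¹ = (θ⁻¹) ^ i),
        Real.mul_rpow (by simp [inv_nonneg]; linarith) (by positivity)]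
      congr 1
      rw [← Real.rpow_natCast θ⁻¹ i, ← Real.rpow_mul (by positivity),
        mul_comm (i:ℝ) q, Real.rpow_mul (by positivity), Real.rpow_natCast]
    have h2 : (θ⁻¹ : ℝ) ^ q = (θ ^ q)⁻¹ := Real.inv_rpow hθ0.le q
    rw [h1, h2, hD_def]
    have h3 : ϑ ^ i * ((θ ^ q)⁻¹) ^ i = γ ^ i := by
      rw [← mul_pow, hγ_def, div_eq_mul_inv]
    calc ϑ ^ i * ((1 - θ)⁻¹ ^ q * ((θ ^ q)⁻¹) ^ i)
        = (1 - θ)⁻¹ ^ q * (ϑ ^ i * ((θ ^ q)⁻¹) ^ i) := by ring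
      _ = (1 - θ)⁻¹ ^ q * γ ^ i := by rw [h3]
  -- iteration
  have key : ∀ m : ℕ, φ r ≤ ϑ ^ m * φ (s m) + D * R * ∑ i ∈ Finset.range m, γ ^ i := by
    intro m
    induction m with
    | zero => simp [hs0]
    | succ m ih =>
      have hstep : φ (s m) ≤ ϑ * φ (s (m + 1)) + Λ m ^ q * R := by
        have := hiter (s m) (s (m + 1)) (hsr m) (hsmono m) (hsρ (m + 1))
        calc φ (s m) ≤ ϑ * φ (s (m + 1)) +
            a * (∫ z in Q, ‖Vfun p μ0 ((s (m + 1) - s m)⁻¹ • v z)‖ ^ 2) +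
            b / (s (m + 1) - s m) ^ 2 + c := this
          _ ≤ ϑ * φ (s (m + 1)) + Λ m ^ q * R := by linarith [hE m]
      have hϑm : (0:ℝ) ≤ ϑ ^ m := by positivity
      have h4 : ϑ ^ m * φ (s m) ≤ ϑ ^ m * (ϑ * φ (s (m + 1)) + Λ m ^ q * R) :=
        mul_le_mul_of_nonneg_left hstep hϑm
      have h5 : ϑ ^ m * (ϑ * φ (s (m + 1)) + Λ m ^ q * R) =
          ϑ ^ (m + 1) * φ (s (m + 1)) + (ϑ ^ m * Λ m ^ q) * R := by ring
      rw [h5, hΛγ m] at h4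
      calc φ r ≤ ϑ ^ m * φ (s m) + D * R * ∑ i ∈ Finset.range m, γ ^ i := ih
        _ ≤ ϑ ^ (m + 1) * φ (s (m + 1)) + D * γ ^ m * R +
            D * R * ∑ i ∈ Finset.range m, γ ^ i := by linarith
        _ = ϑ ^ (m + 1) * φ (s (m + 1)) + D * R * ∑ i ∈ Finset.range (m + 1), γ ^ i := by
            rw [Finset.sum_range_succ]; ring
  -- bound the geometric sum and take the limit
  have hsum : ∀ m : ℕ, (∑ i ∈ Finset.range m, γ ^ i) ≤ (1 - γ)⁻¹ :=
    fun m => geom_sum_le_inv hγ0 hγ1 m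
  have hKnn : 0 ≤ K := le_trans (hφ0 r ⟨le_refl r, by linarith⟩)
    (hK r ⟨le_refl r, by linarith⟩)
  have hfinal : ∀ m : ℕ, φ r ≤ ϑ ^ m * K + D * (1 - γ)⁻¹ * R := by
    intro m
    have h1 : ϑ ^ m * φ (s m) ≤ ϑ ^ m * K :=
      mul_le_mul_of_nonneg_left (hK (s m) ⟨hsr m, hsρ m⟩) (pow_nonneg hϑ0.le m)
    have h2 : D * R * (∑ i ∈ Finset.range m, γ ^ i) ≤ D * R * (1 - γ)⁻¹ :=
      mul_le_mul_of_nonneg_left (hsum m) (mul_nonneg hD0.le hRnn)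
    calc φ r ≤ ϑ ^ m * φ (s m) + D * R * ∑ i ∈ Finset.range m, γ ^ i := key m
      _ ≤ ϑ ^ m * K + D * R * (1 - γ)⁻¹ := by linarith
      _ = ϑ ^ m * K + D * (1 - γ)⁻¹ * R := by ring
  have hlim : Filter.Tendsto (fun m : ℕ => ϑ ^ m * K + D * (1 - γ)⁻¹ * R)
      Filter.atTop (nhds (0 * K + D * (1 - γ)⁻¹ * R)) :=
    (((tendsto_pow_atTop_nhds_zero_of_lt_one hϑ0.le hϑ1).mul_const K).add
      tendsto_const_nhds)
  have := ge_of_tendsto' hlim hfinal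
  simpa [hR_def] using this
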